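/- On the seed X-torus X_{i_0} associated to the quiver A_{n-m-1} ⊠ A_{m-1} with vertices (i,j), 1 ≤ i ≤ n-m-1, 1 ≤ j ≤ m-1, the map induced by the involution ∗ of Conf_n(P^{m-1}) is given in cluster coordinates by ∗^*(X_{i,j}) = X_{n-m-i, m-j}^{-1}. -/

import Mathlib

/-- The Hodge star of the wedge `w 0 ∧ … ∧ w (m-2)` of `m-1` vectors in `ℂ^m`
(standard bilinear inner product and volume form). -/
noncomputable def hodge (m : ℕ) (w : Fin (m - 1) → Fin m → ℂ) : Fin m → ℂ := fun k =>
  Matrix.det (Matrix.of fun r c : Fin m =>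
    if hr : (r : ℕ) = 0 then (if c = k then 1 else 0)
    else w ⟨(r : ℕ) - 1, by have := r.isLt; omega⟩ c)

/-- The `r`-th element (in increasing order) of the index set
`I_{i,j} = [1, m-j] ∪ [m+i-j+1, m+i]` (with `I_{i,0} = [1,m]`). -/
def domIdx (m i j : ℕ) (r : Fin m) : ℕ :=
  if (r : ℕ) < m - j then (r : ℕ) + 1 else m + i - j + 1 + ((r : ℕ) - (m - j))

/-- The cluster `A`-coordinate `A_{i,j} = Δ_{I_{i,j}}`: the Plücker coordinate of
the configuration `w` on the index set `I_{i,j}`. -/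
noncomputable def Ac (m n : ℕ) (w : ZMod n → Fin m → ℂ) (i j : ℕ) : ℂ :=
  Matrix.det (Matrix.of fun r c : Fin m => w ((domIdx m i j r : ℕ) : ZMod n) c)

/-- The cluster `X`-coordinate at the vertex `(i,j)` of the quiver
`A_{n-m-1} ⊠ A_{m-1}`:
`X_{i,j} = (A_{i-1,j-1} A_{i,j+1} A_{i+1,j}) / (A_{i-1,j} A_{i+1,j+1} A_{i,j-1})`. -/
noncomputable def Xc (m n : ℕ) (w : ZMod n → Fin m → ℂ) (i j : ℕ) : ℂ :=
  (Ac m n w (i - 1) (j - 1) * Ac m n w i (j + 1) * Ac m n w (i + 1) j) /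
    (Ac m n w (i - 1) j * Ac m n w (i + 1) (j + 1) * Ac m n w i (j - 1))

/-- The involution `∗` at the level of vectors:
`ξ_i = ⋆(v_{n-i+2} ∧ … ∧ v_{n-i+m})` (indices mod `n`). -/
noncomputable def xiVec (m n : ℕ) (v : ZMod n → Fin m → ℂ) : ZMod n → Fin m → ℂ :=
  fun i => hodge m fun t : Fin (m - 1) => v (2 - i + ((t : ℕ) : ZMod n))

/-! ξ_a is orthogonal to v_{2-a}, …, v_{m-a}, and ⟨ξ_a, v_{1-a}⟩ is the consecutive minor
Δ(v_{1-a}, …, v_{m-a}). By Cauchy–Binet, Δ_I(ξ) Δ_J(v) is the determinant of the pairing matrix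
(⟨ξ_a, v_c⟩)_{a ∈ I, c ∈ J}. Pairing each of I_{i,j}, [1, m] and [i+1, i+m] against
J = I_{n-m-i, m-j} gives a block triangular matrix, and the four diagonal blocks that occur are
shared between these three matrices; one of them is antitriangular with consecutive minors of `v` on
its antidiagonal (the same computation for a full-size block shows that consecutive minors of ξ do
not vanish). Eliminating the blocks yields
  A_{i,j}(ξ) · ∏_{r < m-j} Δ(v_{-i-r}, …) = c_j · Δ_{[i+1, i+m]}(ξ) · A_{n-m-i, m-j}(v)
with c_j ≠ 0 independent of i. In X_{i,j}(ξ) the factors depending on i alone, on j alone, and the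
products of consecutive minors all cancel, leaving X_{n-m-i, m-j}(v)⁻¹.
-/

noncomputable section

namespace ConfStar

open Finset Matrix

theorem sign_mul_det_eq_det_mul_det {ι α β R : Type*} [Fintype ι] [DecidableEq ι] [Fintype α]
    [DecidableEq α] [Fintype β] [DecidableEq β] [CommRing R] (M : Matrix ι ι R)
    (e₁ e₂ : α ⊕ β ≃ ι) (h : ∀ a b, M (e₁ (.inl a)) (e₂ (.inr b)) = 0) :
    (Equiv.Perm.sign (e₁.trans e₂.symm) : R) * M.det =
      (M.submatrix (e₁ ∘ .inl) (e₂ ∘ .inl)).det * (M.submatrix (e₁ ∘ .inr) (e₂ ∘ .inr)).det := by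
  have hblocks : M.submatrix e₁ e₂ = fromBlocks (M.submatrix (e₁ ∘ .inl) (e₂ ∘ .inl)) 0
      (M.submatrix (e₁ ∘ .inr) (e₂ ∘ .inl)) (M.submatrix (e₁ ∘ .inr) (e₂ ∘ .inr)) := by
    ext (a | b) (a' | b') <;> simp [h]
  have hperm : M.submatrix e₁ e₂ = (M.submatrix e₂ e₂).submatrix (e₁.trans e₂.symm) id := by
    ext; simp
  rw [← det_fromBlocks_zero₁₂, ← hblocks, hperm, det_permute, det_submatrix_equiv_self]

section XRatio

variable {K : Type*} [Field K]

def xRatio (a : ℕ → ℕ → K) (i j : ℕ) : K :=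
  a (i - 1) (j - 1) * a i (j + 1) * a (i + 1) j / (a (i - 1) j * a (i + 1) (j + 1) * a i (j - 1))

theorem xRatio_congr {a b : ℕ → ℕ → K} {i j : ℕ}
    (h : ∀ i' ≤ i + 1, ∀ j' ≤ j + 1, a i' j' = b i' j') : xRatio a i j = xRatio b i j := by
  unfold xRatio
  rw [h (i - 1) (by omega) (j - 1) (by omega), h i (by omega) (j + 1) le_rfl,
    h (i + 1) le_rfl j (by omega), h (i - 1) (by omega) j (by omega),
    h (i + 1) le_rfl (j + 1) le_rfl, h i (by omega) (j - 1) (by omega)]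

theorem xRatio_mul (a b : ℕ → ℕ → K) (i j : ℕ) :
    xRatio (fun i j => a i j * b i j) i j = xRatio a i j * xRatio b i j := by
  unfold xRatio
  ring

theorem xRatio_div (a b : ℕ → ℕ → K) (i j : ℕ) :
    xRatio (fun i j => a i j / b i j) i j = xRatio a i j / xRatio b i j := by
  unfold xRatio
  ring

theorem xRatio_eq_one_of_fst (c : ℕ → K) {i : ℕ} (j : ℕ)
    (hc : ∀ i' ≤ i + 1, c i' ≠ 0) : xRatio (fun i _ => c i) i j = 1 := by
  have := hc (i - 1) (by omega)
  have := hc i (by omega)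
  have := hc (i + 1) le_rfl
  unfold xRatio
  field_simp

theorem xRatio_eq_one_of_snd (c : ℕ → K) (i : ℕ) {j : ℕ}
    (hc : ∀ j' ≤ j + 1, c j' ≠ 0) : xRatio (fun _ j => c j) i j = 1 := by
  have := hc (j - 1) (by omega)
  have := hc j (by omega)
  have := hc (j + 1) le_rfl
  unfold xRatio
  field_simp

theorem xRatio_reflect (a : ℕ → ℕ → K) {I J i j : ℕ} (hi : 1 ≤ i) (hiI : i < I)
    (hj : 1 ≤ j) (hjJ : j < J) :
    xRatio (fun i j => a (I - i) (J - j)) i j = (xRatio a (I - i) (J - j))⁻¹ := by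
  dsimp only [xRatio]
  rw [show I - (i - 1) = I - i + 1 by omega, show J - (j - 1) = J - j + 1 by omega,
    show I - (i + 1) = I - i - 1 by omega, show J - (j + 1) = J - j - 1 by omega, inv_div]
  ring

def descProd {R : Type*} [Ring R] (g : R → K) (a : R) (k : ℕ) : K :=
  ∏ r ∈ range k, g (a - r)

theorem descProd_succ {R : Type*} [Ring R] (g : R → K) (a : R) (k : ℕ) :
    descProd g a (k + 1) = g a * descProd g (a - 1) k := by
  simp only [descProd, prod_range_succ', Nat.cast_add, Nat.cast_one, Nat.cast_zero, sub_zero,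
    sub_add_eq_sub_sub_swap]
  ring

theorem descProd_ne_zero {R : Type*} [Ring R] {g : R → K} (hg : ∀ x, g x ≠ 0) (a : R) (k : ℕ) :
    descProd g a k ≠ 0 :=
  prod_ne_zero_iff.mpr fun _ _ => hg _

theorem xRatio_descProd {R : Type*} [CommRing R] {g : R → K} (hg : ∀ x, g x ≠ 0) {J i j : ℕ}
    (hi : 1 ≤ i) (hj : 1 ≤ j) (hjJ : j < J) :
    xRatio (fun i j => descProd g (-(i : R)) (J - j)) i j = 1 := by
  obtain ⟨k, hk⟩ : ∃ k, J - j = k + 1 := ⟨J - j - 1, by omega⟩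
  dsimp only [xRatio]
  rw [show J - (j - 1) = k + 1 + 1 by omega, show J - (j + 1) = k by omega, hk,
    Nat.cast_sub hi, div_eq_one_iff_eq (by simp [descProd_ne_zero hg])]
  simp only [descProd_succ, Nat.cast_add, Nat.cast_one]
  ring_nf

end XRatio

variable {m n : ℕ}

theorem Xc_eq_xRatio (w : ZMod n → Fin m → ℂ) (i j : ℕ) : Xc m n w i j = xRatio (Ac m n w) i j :=
  rfl

theorem hodge_dotProduct [NeZero m] (w : Fin (m - 1) → Fin m → ℂ) (u : Fin m → ℂ) :
    hodge m w ⬝ᵥ u = (of fun r c : Fin m => if hr : (r : ℕ) = 0 then u c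
      else w ⟨(r : ℕ) - 1, by have := r.isLt; omega⟩ c).det := by
  set M₀ : Matrix (Fin m) (Fin m) ℂ := of fun r c => if hr : (r : ℕ) = 0 then 0
    else w ⟨(r : ℕ) - 1, by have := r.isLt; omega⟩ c
  have hrow : ∀ u : Fin m → ℂ, (of fun r c : Fin m => if hr : (r : ℕ) = 0 then u c
      else w ⟨(r : ℕ) - 1, by have := r.isLt; omega⟩ c) = M₀.updateRow 0 u := by
    intro u
    ext r c
    by_cases hr : (r : ℕ) = 0
    · obtain rfl : r = 0 := Fin.ext hr
      simp [M₀]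
    · simp [M₀, show r ≠ 0 from fun h => hr (by simp [h])]
  let f := (detRowAlternating (n := Fin m) (R := ℂ)).toMultilinearMap.toLinearMap M₀ 0
  have hf : ∀ u, f u = (M₀.updateRow 0 u).det := fun _ => rfl
  rw [hrow, ← hf, LinearMap.pi_apply_eq_sum_univ f u, dotProduct]
  refine sum_congr rfl fun k _ => ?_
  rw [hf, ← hrow, smul_eq_mul, mul_comm, hodge]
  congr 2
  ext r c
  simp [eq_comm]

def plucker (w : ZMod n → Fin m → ℂ) (f : Fin m → ZMod n) : ℂ :=
  (of fun r c => w (f r) c).det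

def window (a : ZMod n) (k : ℕ) : Fin k → ZMod n := fun r => a + r

theorem injective_add_natCast {ι : Type*} {g : ι → ℕ} (hg : Function.Injective g)
    (hlt : ∀ r, g r < n) (a : ZMod n) : Function.Injective fun r => a + (g r : ZMod n) := by
  intro r s h
  apply hg
  have := add_left_cancel h
  rw [ZMod.natCast_eq_natCast_iff] at this
  exact this.eq_of_lt_of_lt (hlt r) (hlt s)

theorem window_injective {k : ℕ} (hk : k ≤ n) (a : ZMod n) : Function.Injective (window a k) :=
  injective_add_natCast Fin.val_injective (fun r => by omega) a

section Split

variable {p q : ℕ} (hpq : p + q = m)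

def splitEquiv : Fin p ⊕ Fin q ≃ Fin m :=
  finSumFinEquiv.trans (finCongr hpq)

@[simp]
theorem splitEquiv_inl (a : Fin p) : (splitEquiv hpq (.inl a) : ℕ) = a := by
  simp [splitEquiv]

@[simp]
theorem splitEquiv_inr (b : Fin q) : (splitEquiv hpq (.inr b) : ℕ) = p + b := by
  simp [splitEquiv]

theorem window_comp_splitEquiv (a : ZMod n) :
    window a m ∘ splitEquiv hpq = Sum.elim (window a p) (window (a + (p : ZMod n)) q) := by
  ext (r | r) <;> simp [window, add_assoc]

theorem domIdx_comp_splitEquiv (i : ℕ) :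
    (fun r => ((domIdx m i q r : ℕ) : ZMod n)) ∘ splitEquiv hpq =
      Sum.elim (window 1 p) (window ((i : ZMod n) + 1 + (p : ZMod n)) q) := by
  ext (r | r)
  · simp [domIdx, window, show (r : ℕ) < m - q by omega, add_comm]
  · simp only [Function.comp_apply, domIdx, splitEquiv_inr, Sum.elim_inr, window]
    rw [if_neg (by omega), show m + i - q + 1 + (p + r - (m - q)) = i + 1 + p + r by omega]
    push_cast
    ring

theorem domIdx_reflect_comp_splitEquiv (hqp : q + p = m) {i : ℕ} (hin : i + m ≤ n) :
    (fun s => ((domIdx m (n - m - i) p s : ℕ) : ZMod n)) ∘ splitEquiv hqp =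
      Sum.elim (window 1 q) (window (1 - (p : ZMod n) - (i : ZMod n)) p) := by
  ext (s | s)
  · simp [domIdx, window, show (s : ℕ) < m - p by omega, add_comm]
  · simp only [Function.comp_apply, domIdx, splitEquiv_inr, Sum.elim_inr, window]
    rw [if_neg (by omega), show m + (n - m - i) - p + 1 + (q + s - (m - p)) = n - (i + p) + (1 + s)
      by omega, Nat.cast_add, Nat.cast_sub (by omega), ZMod.natCast_self]
    push_cast
    ring

end Split

section Configuration

variable (v : ZMod n → Fin m → ℂ)

def InGeneralPosition : Prop :=
  ∀ s : Fin m → ZMod n, Function.Injective s → LinearIndependent ℂ (fun r => v (s r))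

def pairing (a c : ZMod n) : ℂ := xiVec m n v a ⬝ᵥ v c

def pairingDet {α : Type*} [Fintype α] [DecidableEq α] (x y : α → ZMod n) : ℂ :=
  (of fun a b => pairing v (x a) (y b)).det

theorem pairing_eq_det [NeZero m] (a c : ZMod n) :
    pairing v a c = (of fun r k : Fin m => if (r : ℕ) = 0 then v c k
      else v (2 - a + ((r - 1 : ℕ) : ZMod n)) k).det := by
  rw [pairing, xiVec, hodge_dotProduct]
  simp only [dite_eq_ite]

theorem pairing_eq_zero [NeZero m] {a c : ZMod n} {t : ℕ} (ht : t + 2 ≤ m)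
    (hc : c = 2 - a + t) : pairing v a c = 0 := by
  rw [pairing_eq_det]
  refine det_zero_of_row_eq (i := 0) (j := ⟨t + 1, by omega⟩) (by simp [Fin.ext_iff]) ?_
  ext k
  simp [hc]

theorem pairing_window_eq_zero [NeZero m] {a b : ZMod n} (hab : a + b = 2) {r s : ℕ}
    (hrs : r + s + 2 ≤ m) : pairing v (a + r) (b + s) = 0 :=
  pairing_eq_zero v (t := r + s) (by omega) (by rw [← hab]; push_cast; ring)

theorem pairing_self [NeZero m] (a : ZMod n) :
    pairing v a (1 - a) = plucker v (window (1 - a) m) := by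
  rw [pairing_eq_det, plucker]
  congr 1
  ext r k
  by_cases hr : (r : ℕ) = 0
  · obtain rfl : r = 0 := Fin.ext hr
    simp [window]
  · simp only [of_apply, if_neg hr, window]
    congr 1
    rw [Nat.cast_sub (by omega)]
    ring

theorem pairingDet_eq (x y : Fin m → ZMod n) :
    pairingDet v x y = plucker (xiVec m n v) x * plucker v y := by
  have : (of fun a b => pairing v (x a) (y b)) =
      (of fun r c => xiVec m n v (x r) c) * (of fun r c => v (y r) c)ᵀ := by
    ext
    simp [pairing, mul_apply, dotProduct]
  rw [pairingDet, this, det_mul, det_transpose]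
  rfl

theorem sign_mul_plucker_mul_plucker {α β : Type*} [Fintype α] [DecidableEq α] [Fintype β]
    [DecidableEq β] {f g : Fin m → ZMod n} (e₁ e₂ : α ⊕ β ≃ Fin m) {x₁ y₁ : α → ZMod n}
    {x₂ y₂ : β → ZMod n} (hf : f ∘ e₁ = Sum.elim x₁ x₂) (hg : g ∘ e₂ = Sum.elim y₁ y₂)
    (hzero : ∀ a b, pairing v (x₁ a) (y₂ b) = 0) :
    (Equiv.Perm.sign (e₁.trans e₂.symm) : ℂ) * (plucker (xiVec m n v) f * plucker v g) =
      pairingDet v x₁ y₁ * pairingDet v x₂ y₂ := by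
  have hf' := congrFun hf
  have hg' := congrFun hg
  simp only [Function.comp_apply, Sum.forall, Sum.elim_inl, Sum.elim_inr] at hf' hg'
  rw [← pairingDet_eq, pairingDet, sign_mul_det_eq_det_mul_det _ e₁ e₂ (by simp [hf', hg', hzero])]
  congr 2 <;> ext <;> simp [hf', hg']

theorem sign_rev_mul_pairingDet_window [NeZero m] (a : ZMod n) {k : ℕ} (hk : k ≤ m) :
    (Equiv.Perm.sign (Fin.revPerm : Equiv.Perm (Fin k)) : ℂ) *
        pairingDet v (window a k) (window (2 - a - (k : ZMod n)) k) =
      descProd (fun b => plucker v (window b m)) (1 - a) k := by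
  rw [pairingDet, ← det_permute', det_of_isUpperTriangular, descProd,
    ← Fin.prod_univ_eq_prod_range]
  · refine prod_congr rfl fun r _ => ?_
    simp only [submatrix_apply, id, of_apply, Fin.revPerm_apply, Fin.val_rev, window]
    rw [show 2 - a - (k : ZMod n) + ((k - (r + 1) : ℕ) : ZMod n) = 1 - (a + r) by
      rw [Nat.cast_sub (by omega)]; push_cast; ring, pairing_self]
    congr 2
    ring
  · intro r c hcr
    simp only [submatrix_apply, id, of_apply, Fin.revPerm_apply, Fin.val_rev, window]
    have hcr : (c : ℕ) < r := hcr
    refine pairing_eq_zero v (t := r - c - 1) (by omega) ?_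
    rw [Nat.cast_sub (show 1 ≤ (r : ℕ) - c by omega), Nat.cast_sub hcr.le,
      Nat.cast_sub (show (c : ℕ) + 1 ≤ k by omega)]
    push_cast
    ring

theorem plucker_ne_zero
(hgen : InGeneralPosition v) {f : Fin m → ZMod n} (hf : Function.Injective f) : plucker v f ≠ 0 :=
  ((isUnit_iff_isUnit_det _).mp (linearIndependent_rows_iff_isUnit.mp (hgen f hf))).ne_zero

theorem plucker_window_ne_zero (hgen : InGeneralPosition v) (hmn : m ≤ n) (a : ZMod n) :
    plucker v (window a m) ≠ 0 :=
  plucker_ne_zero v hgen (window_injective hmn a)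

theorem Ac_ne_zero (hgen : InGeneralPosition v) {i j : ℕ} (hin : i + m ≤ n) (hj : j ≤ m) :
    Ac m n v i j ≠ 0 := by
  have hpos : ∀ r, 1 ≤ domIdx m i j r := fun r => by unfold domIdx; split_ifs <;> omega
  have hmono : StrictMono fun r => domIdx m i j r - 1 := fun r s (h : (r : ℕ) < s) => by
    have := s.isLt
    dsimp only [domIdx]
    split_ifs <;> omega
  have hrows : (fun r => ((domIdx m i j r : ℕ) : ZMod n)) =
      fun r => 1 + ((domIdx m i j r - 1 : ℕ) : ZMod n) := by
    funext r
    rw [Nat.cast_sub (hpos r)]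
    ring
  refine plucker_ne_zero v hgen (f := fun r => ((domIdx m i j r : ℕ) : ZMod n)) ?_
  rw [hrows]
  refine injective_add_natCast hmono.injective (fun r => ?_) 1
  have := r.isLt
  unfold domIdx
  split_ifs <;> omega

theorem plucker_xiVec_window_ne_zero [NeZero m] (hgen : InGeneralPosition v) (hmn : m ≤ n)
    (a : ZMod n) :
    plucker (xiVec m n v) (window a m) ≠ 0 := by
  have h := sign_rev_mul_pairingDet_window v a le_rfl
  rw [pairingDet_eq] at h
  have hP : descProd (fun b => plucker v (window b m)) (1 - a) m ≠ 0 :=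
    descProd_ne_zero (plucker_window_ne_zero v hgen hmn) _ _
  rw [← h] at hP
  exact left_ne_zero_of_mul (right_ne_zero_of_mul hP)

theorem mul_eq_of_block_eqs {K : Type*} [Field K] {s s' σ X A F F₀ Q R Y Z P : K}
    (hs : s ≠ 0) (hA : A ≠ 0) (hY : Y ≠ 0) (h₁ : s * (X * A) = Q * R) (h₂ : s * (F₀ * A) = Q * Y)
    (h₃ : s' * (F * A) = R * Z) (h₄ : σ * Z = P) : X * P = σ * s' * F₀ / Y * F * A := by
  have hXY : X * Y = F₀ * R :=
    mul_left_cancel₀ (mul_ne_zero hs hA) (by linear_combination Y * h₁ - R * h₂)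
  field_simp
  linear_combination P * hXY - F₀ * R * h₄ - σ * F₀ * h₃

theorem exists_Ac_xiVec_mul_descProd [NeZero m] (hgen : InGeneralPosition v) (hmn : m ≤ n)
    {p q : ℕ} (hpq : p + q = m) :
    ∃ c : ℂ, c ≠ 0 ∧ ∀ i, i + m ≤ n →
      Ac m n (xiVec m n v) i q * descProd (fun b => plucker v (window b m)) (-(i : ZMod n)) p =
        c * plucker (xiVec m n v) (window ((i : ZMod n) + 1) m) * Ac m n v (n - m - i) p := by
  have hqp : q + p = m := by omega
  have hcols := fun i (hi : i + m ≤ n) => domIdx_reflect_comp_splitEquiv hqp hi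
  have hcolsSwap : ∀ i, i + m ≤ n → (fun s => ((domIdx m (n - m - i) p s : ℕ) : ZMod n)) ∘
      ((Equiv.sumComm _ _).trans (splitEquiv hqp)) =
        Sum.elim (window (1 - (p : ZMod n) - (i : ZMod n)) p) (window 1 q) := by
    intro i hi
    exact (congrArg (· ∘ Sum.swap) (hcols i hi)).trans Sum.elim_swap
  have hrowsFirst : window (1 : ZMod n) m ∘ splitEquiv hpq =
      Sum.elim (window 1 p) (window (1 + (p : ZMod n)) q) := window_comp_splitEquiv hpq 1
  have hrowsShift : ∀ i : ℕ,
      window ((i : ZMod n) + 1) m ∘ ((Equiv.sumComm _ _).trans (splitEquiv hpq)) =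
      Sum.elim (window ((i : ZMod n) + 1 + (p : ZMod n)) q) (window ((i : ZMod n) + 1) p) :=
    fun i => (congrArg (· ∘ Sum.swap) (window_comp_splitEquiv hpq _)).trans Sum.elim_swap
  have hzero : ∀ (a : Fin p) (b : Fin q), pairing v (window 1 p a) (window 1 q b) = 0 :=
    fun a b => pairing_window_eq_zero v one_add_one_eq_two (by omega)
  have hI := fun i hi => sign_mul_plucker_mul_plucker v _ _ (domIdx_comp_splitEquiv hpq i)
    (hcolsSwap i hi) hzero
  have hFirst := fun i hi => sign_mul_plucker_mul_plucker v _ _ hrowsFirst (hcolsSwap i hi) hzero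
  have hShift := fun (i : ℕ) hi => sign_mul_plucker_mul_plucker v _ _ (hrowsShift i) (hcols i hi)
    (fun a b => pairing_window_eq_zero v (by ring) (by omega))
  have hAnti := fun i : ℕ => sign_rev_mul_pairingDet_window v ((i : ZMod n) + 1) (k := p) (by omega)
  simp only [show ∀ x : ZMod n, 2 - (x + 1) - (p : ZMod n) = 1 - p - x from fun x => by ring,
    show ∀ x : ZMod n, 1 - (x + 1) = -x from fun x => by ring] at hAnti
  have hA' : ∀ i, i + m ≤ n → plucker v (fun s => ((domIdx m (n - m - i) p s : ℕ) : ZMod n)) ≠ 0 :=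
    fun i hi => Ac_ne_zero v hgen (by omega) (by omega)
  have hF := plucker_xiVec_window_ne_zero v hgen hmn
  set Y := pairingDet v (window (1 + (p : ZMod n)) q) (window 1 q)
  have hY : Y ≠ 0 := right_ne_zero_of_mul <| by
    rw [← hFirst 0 (by omega)]
    exact mul_ne_zero (by simp) (mul_ne_zero (hF 1) (hA' 0 (by omega)))
  refine ⟨(Equiv.Perm.sign (Fin.revPerm : Equiv.Perm (Fin p)) : ℂ) *
    (Equiv.Perm.sign (((Equiv.sumComm (Fin q) (Fin p)).trans (splitEquiv hpq)).trans
      (splitEquiv hqp).symm) : ℂ) * plucker (xiVec m n v) (window 1 m) / Y,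
    by simp [hY, hF], fun i hi => ?_⟩
  exact mul_eq_of_block_eqs (by simp) (hA' i hi) hY (hI i hi) (hFirst i hi) (hShift i hi) (hAnti i)

end Configuration

end ConfStar

end

open ConfStar in
theorem stmt_18_general (m n : ℕ)
    (v : ZMod n → Fin m → ℂ)
    (hgen : ∀ s : Fin m → ZMod n, Function.Injective s →
      LinearIndependent ℂ (fun r => v (s r)))
    (i j : ℕ) (hi1 : 1 ≤ i) (hi2 : i ≤ n - m - 1) (hj1 : 1 ≤ j) (hj2 : j ≤ m - 1) :
    Xc m n (xiVec m n v) i j = (Xc m n v (n - m - i) (m - j))⁻¹ := by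
  have : NeZero m := ⟨by omega⟩
  have hmn : m ≤ n := by omega
  choose! c hc0 hc using fun j (hj : j ≤ m) =>
    exists_Ac_xiVec_mul_descProd v hgen hmn (p := m - j) (q := j) (by omega)
  have hD := plucker_window_ne_zero v hgen hmn
  have hAc : ∀ i' ≤ i + 1, ∀ j' ≤ j + 1, Ac m n (xiVec m n v) i' j' =
      c j' * plucker (xiVec m n v) (window ((i' : ZMod n) + 1) m) * Ac m n v (n - m - i') (m - j') /
        descProd (fun b => plucker v (window b m)) (-(i' : ZMod n)) (m - j') :=
    fun i' hi' j' hj' => eq_div_of_mul_eq (descProd_ne_zero hD _ _) (hc j' (by omega) i' (by omega))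
  rw [Xc_eq_xRatio, xRatio_congr hAc, xRatio_div, xRatio_mul, xRatio_mul,
    xRatio_eq_one_of_snd c i fun j' hj' => hc0 j' (by omega),
    xRatio_eq_one_of_fst _ j fun i' _ => plucker_xiVec_window_ne_zero v hgen hmn _,
    xRatio_reflect _ hi1 (by omega) hj1 (by omega), xRatio_descProd hD hi1 hj1 (by omega),
    Xc_eq_xRatio]
  simp

/-- On the seed `X`-torus of the quiver `A_{n-m-1} ⊠ A_{m-1}`, the map induced by
the involution `∗` of `Conf_n(P^{m-1})` is `∗^*(X_{i,j}) = X_{n-m-i, m-j}⁻¹`. -/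
theorem stmt_18 (m n : ℕ) (hm : 1 < m) (hn : m + 1 < n)
    (v : ZMod n → Fin m → ℂ)
    (hgen : ∀ s : Fin m → ZMod n, Function.Injective s →
      LinearIndependent ℂ (fun r => v (s r)))
    (i j : ℕ) (hi1 : 1 ≤ i) (hi2 : i ≤ n - m - 1) (hj1 : 1 ≤ j) (hj2 : j ≤ m - 1) :
    Xc m n (xiVec m n v) i j = (Xc m n v (n - m - i) (m - j))⁻¹ :=
  stmt_18_general m n v hgen i j hi1 hi2 hj1 hj2
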